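/- Let A be an endomorphism of Minkowski space V that is skew-adjoint with respect to ⟨·,·⟩, and suppose A has null eigenvectors V₊, V₋ with eigenvalues ζ and −ζ respectively (ζ > 0, ⟨V₊,V₋⟩ ≠ 0), and A vanishes on the orthogonal complement of span(V₊,V₋). Then lim_{t→∞} e^{−tζ} exp(tA) = P, where P is the endomorphism P(x) = ⟨V₋,x⟩V₊ / ⟨V₊,V₋⟩. -/

import Mathlib

open Matrix Filter

/-- Sign of the Minkowski metric on `ℝ^{n+2}_1`: the last coordinate is timelike. -/
noncomputable def minkSign (n : ℕ) (i : Fin (n + 2)) : ℝ := if (i : ℕ) = n + 1 then -1 else 1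

/-- The Minkowski inner product `⟨·,·⟩` on `ℝ^{n+2}_1` (signature (n+1,1)). -/
noncomputable def mink (n : ℕ) (x y : Fin (n + 2) → ℝ) : ℝ := ∑ i, minkSign n i * x i * y i

/-- The wedge endomorphism `(v ∧ w)(x) = ⟨v,x⟩w − ⟨w,x⟩v`, realized as a matrix acting by `mulVec`. -/
noncomputable def wedgeM (n : ℕ) (v w : Fin (n + 2) → ℝ) : Matrix (Fin (n + 2)) (Fin (n + 2)) ℝ :=
  Matrix.of fun i j => minkSign n j * (v j * w i - w j * v i)

/-!
Write `P` for the projection onto `ℝ V₊` along `V₋^⊥` and `Q` for the projection onto `ℝ V₋`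
along `V₊^⊥`. Because `V₊` and `V₋` are null, `P` and `Q` are idempotents with `P Q = Q P = 0`,
and the hypotheses on `A` say exactly that `A = ζ (P - Q)`. For such `P, Q` the exponential series
collapses to `exp (s (P - Q)) = 1 + (eˢ - 1) P + (e⁻ˢ - 1) Q`, so
`e⁻ˢ exp (s (P - Q)) = P + e⁻ˢ (1 - P - Q) + e⁻²ˢ Q`, which tends to `P` as `s → ∞`.
-/

open Topology

section IdempotentExp

variable {𝔸 : Type*} [NormedRing 𝔸] [NormedAlgebra ℝ 𝔸] [CompleteSpace 𝔸] {P Q : 𝔸}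

theorem exp_smul_of_isIdempotentElem (hP : IsIdempotentElem P) (s : ℝ) :
    NormedSpace.exp (s • P) = 1 + (Real.exp s - 1) • P := by
  have hterm : ∀ k : ℕ, ((k.factorial : ℝ)⁻¹) • (s • P) ^ k
      = ((k.factorial : ℝ)⁻¹ * s ^ k) • P + if k = 0 then 1 - P else 0 := by
    rintro (_ | k)
    · simp
    · simp [smul_pow, hP.pow_succ_eq, smul_smul]
  have hsum : HasSum (fun k : ℕ => ((k.factorial : ℝ)⁻¹) • (s • P) ^ k)
      (1 + (Real.exp s - 1) • P) := by
    have hexp := NormedSpace.exp_series_hasSum_exp' (𝕂 := ℝ) s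
    rw [← Real.exp_eq_exp_ℝ] at hexp
    convert (hexp.smul_const P).add (hasSum_ite_eq 0 (1 - P)) using 1
    · exact funext hterm
    · simp only [sub_smul, one_smul]; abel
  exact (NormedSpace.exp_series_hasSum_exp' (𝕂 := ℝ) (s • P)).unique hsum

theorem exp_smul_sub_of_isIdempotentElem (hP : IsIdempotentElem P) (hQ : IsIdempotentElem Q)
    (hPQ : P * Q = 0) (hQP : Q * P = 0) (s : ℝ) :
    NormedSpace.exp (s • (P - Q)) = 1 + (Real.exp s - 1) • P + (Real.exp (-s) - 1) • Q := by
  let +nondep : NormedAlgebra ℚ 𝔸 := .restrictScalars ℚ ℝ 𝔸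
  have hcomm : Commute (s • P) ((-s) • Q) :=
    ((show Commute P Q from hPQ.trans hQP.symm).smul_left s).smul_right (-s)
  rw [smul_sub, sub_eq_add_neg, ← neg_smul, NormedSpace.exp_add_of_commute hcomm,
    exp_smul_of_isIdempotentElem hP, exp_smul_of_isIdempotentElem hQ]
  simp only [mul_add, add_mul, one_mul, mul_one, smul_mul_smul, hPQ, smul_zero, add_zero]

theorem tendsto_exp_neg_smul_exp_smul_sub (hP : IsIdempotentElem P) (hQ : IsIdempotentElem Q)
    (hPQ : P * Q = 0) (hQP : Q * P = 0) :
    Tendsto (fun s : ℝ => Real.exp (-s) • NormedSpace.exp (s • (P - Q))) atTop (𝓝 P) := by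
  let g : ℝ → 𝔸 := fun u => P + u • (1 - P - Q) + u ^ 2 • Q
  have hg : Tendsto g (𝓝 0) (𝓝 P) := by
    simpa [g] using (show Continuous g by fun_prop).tendsto 0
  refine (hg.comp Real.tendsto_exp_neg_atTop_nhds_zero).congr fun s => ?_
  have hinv : Real.exp (-s) * Real.exp s = 1 := by
    rw [← Real.exp_add, neg_add_cancel, Real.exp_zero]
  rw [exp_smul_sub_of_isIdempotentElem hP hQ hPQ hQP]
  simp only [g, Function.comp_apply, smul_add, smul_smul, hinv, sq, smul_sub, sub_smul, one_smul]
  abel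

end IdempotentExp

section Minkowski

variable {n : ℕ}

theorem mink_comm (x y : Fin (n + 2) → ℝ) : mink n x y = mink n y x :=
  Finset.sum_congr rfl fun _ _ => by ring

theorem mink_eq_dotProduct (x y : Fin (n + 2) → ℝ) :
    mink n x y = (fun i => minkSign n i * x i) ⬝ᵥ y := rfl

@[simp]
theorem mink_add_right (x y z : Fin (n + 2) → ℝ) : mink n x (y + z) = mink n x y + mink n x z := by
  simp only [mink_eq_dotProduct, dotProduct_add]

@[simp]
theorem mink_sub_right (x y z : Fin (n + 2) → ℝ) : mink n x (y - z) = mink n x y - mink n x z := by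
  simp only [mink_eq_dotProduct, dotProduct_sub]

@[simp]
theorem mink_smul_right (c : ℝ) (x y : Fin (n + 2) → ℝ) : mink n x (c • y) = c * mink n x y := by
  simp only [mink_eq_dotProduct, dotProduct_smul, smul_eq_mul]

noncomputable def minkRankOne (n : ℕ) (v w : Fin (n + 2) → ℝ) :
    Matrix (Fin (n + 2)) (Fin (n + 2)) ℝ :=
  Matrix.of fun i j => minkSign n j * v j * w i

theorem minkRankOne_mulVec (v w x : Fin (n + 2) → ℝ) :
    minkRankOne n v w *ᵥ x = mink n v x • w := by
  ext i
  simp only [minkRankOne, mulVec, dotProduct, of_apply, Pi.smul_apply, mink, smul_eq_mul,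
    Finset.sum_mul]
  exact Finset.sum_congr rfl fun _ _ => by ring

theorem minkRankOne_mul_minkRankOne (v w v' w' : Fin (n + 2) → ℝ) :
    minkRankOne n v w * minkRankOne n v' w' = mink n v w' • minkRankOne n v' w := by
  ext i j
  simp only [minkRankOne, mul_apply, of_apply, Matrix.smul_apply, mink, smul_eq_mul, Finset.sum_mul]
  exact Finset.sum_congr rfl fun _ _ => by ring

/-- The projection onto `ℝ w` along `v^⊥`. -/
noncomputable def minkProj (n : ℕ) (v w : Fin (n + 2) → ℝ) : Matrix (Fin (n + 2)) (Fin (n + 2)) ℝ :=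
  (mink n v w)⁻¹ • minkRankOne n v w

theorem minkProj_mulVec (v w x : Fin (n + 2) → ℝ) :
    minkProj n v w *ᵥ x = (mink n v x / mink n v w) • w := by
  rw [minkProj, smul_mulVec, minkRankOne_mulVec, smul_smul, inv_mul_eq_div]

theorem minkProj_mul_minkProj_of_mink_eq_zero {v w v' w' : Fin (n + 2) → ℝ}
    (h : mink n v w' = 0) : minkProj n v w * minkProj n v' w' = 0 := by
  simp [minkProj, minkRankOne_mul_minkRankOne, h]

theorem isIdempotentElem_minkProj {v w : Fin (n + 2) → ℝ} (h : mink n v w ≠ 0) :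
    IsIdempotentElem (minkProj n v w) := by
  rw [IsIdempotentElem, minkProj, smul_mul_smul, minkRankOne_mul_minkRankOne, smul_smul,
    inv_mul_cancel_right₀ h]

theorem eq_smul_sub_minkProj {A : Matrix (Fin (n + 2)) (Fin (n + 2)) ℝ} {ζ : ℝ}
    {Vp Vm : Fin (n + 2) → ℝ} (hVp : mink n Vp Vp = 0) (hVm : mink n Vm Vm = 0)
    (hpm : mink n Vp Vm ≠ 0) (heigp : A *ᵥ Vp = ζ • Vp) (heigm : A *ᵥ Vm = (-ζ) • Vm)
    (hperp : ∀ x, mink n Vp x = 0 → mink n Vm x = 0 → A *ᵥ x = 0) :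
    A = ζ • (minkProj n Vm Vp - minkProj n Vp Vm) := by
  have hmp : mink n Vm Vp ≠ 0 := mink_comm Vp Vm ▸ hpm
  refine ext_iff_mulVec.2 fun x => ?_
  set a := mink n Vm x / mink n Vm Vp
  set b := mink n Vp x / mink n Vp Vm
  set y := x - a • Vp - b • Vm
  have hyp : mink n Vp y = 0 := by
    simp only [y, mink_sub_right, mink_smul_right, hVp, b]
    field_simp
    ring
  have hym : mink n Vm y = 0 := by
    simp only [y, mink_sub_right, mink_smul_right, hVm, a]
    field_simp
    ring
  have hAx : A *ᵥ x = (a * ζ) • Vp - (b * ζ) • Vm := by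
    have hx : x = a • Vp + b • Vm + y := by simp only [y]; abel
    rw [hx, mulVec_add, mulVec_add, mulVec_smul, mulVec_smul, heigp, heigm, hperp y hyp hym]
    module
  rw [hAx, smul_mulVec, sub_mulVec, minkProj_mulVec, minkProj_mulVec]
  module

end Minkowski

theorem skew_minkowski_rescaled_exp_limit_general (n : ℕ)
    (A : Matrix (Fin (n + 2)) (Fin (n + 2)) ℝ) (ζ : ℝ) (Vp Vm : Fin (n + 2) → ℝ)
    (hζ : 0 < ζ)
    (hVp : mink n Vp Vp = 0) (hVm : mink n Vm Vm = 0)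
    (hpm : mink n Vp Vm ≠ 0)
    (heigp : A.mulVec Vp = ζ • Vp) (heigm : A.mulVec Vm = (-ζ) • Vm)
    (hperp : ∀ x, mink n Vp x = 0 → mink n Vm x = 0 → A.mulVec x = 0) :
    Tendsto (fun t : ℝ => Real.exp (-(t * ζ)) • NormedSpace.exp (t • A)) atTop
      (nhds ((mink n Vp Vm)⁻¹ • Matrix.of fun i j => minkSign n j * Vm j * Vp i)) := by
  let : NormedRing (Matrix (Fin (n + 2)) (Fin (n + 2)) ℝ) := Matrix.linftyOpNormedRing
  let : NormedAlgebra ℝ (Matrix (Fin (n + 2)) (Fin (n + 2)) ℝ) := Matrix.linftyOpNormedAlgebra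
  have hmp : mink n Vm Vp ≠ 0 := mink_comm Vp Vm ▸ hpm
  have hlim := tendsto_exp_neg_smul_exp_smul_sub (isIdempotentElem_minkProj hmp)
    (isIdempotentElem_minkProj hpm) (minkProj_mul_minkProj_of_mink_eq_zero hVm)
    (minkProj_mul_minkProj_of_mink_eq_zero hVp)
  have hA := eq_smul_sub_minkProj hVp hVm hpm heigp heigm hperp
  have hP : (mink n Vp Vm)⁻¹ • Matrix.of (fun i j => minkSign n j * Vm j * Vp i)
      = minkProj n Vm Vp := by
    rw [mink_comm]
    rfl
  rw [hP]
  refine (hlim.comp (tendsto_id.atTop_mul_const hζ)).congr fun t => ?_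
  simp only [Function.comp_apply, id, hA, smul_smul]
  -- the two sides differ only by instances that unfold to the same structures on matrices
  rfl

/-- for a skew-adjoint `A` with null eigenvectors `V₊, V₋` of eigenvalues `±ζ`
(`ζ > 0`, `⟨V₊,V₋⟩ ≠ 0`) vanishing on `span(V₊,V₋)^⊥`, the rescaled one-parameter group
`e^{−tζ} exp(tA)` converges to the rank-one projection `x ↦ ⟨V₋,x⟩V₊/⟨V₊,V₋⟩`. -/
theorem skew_minkowski_rescaled_exp_limit (n : ℕ)
    (A : Matrix (Fin (n + 2)) (Fin (n + 2)) ℝ) (ζ : ℝ) (Vp Vm : Fin (n + 2) → ℝ)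
    (hskew : ∀ x y, mink n (A.mulVec x) y = - mink n x (A.mulVec y))
    (hζ : 0 < ζ)
    (hVp : mink n Vp Vp = 0) (hVm : mink n Vm Vm = 0)
    (hpm : mink n Vp Vm ≠ 0)
    (heigp : A.mulVec Vp = ζ • Vp) (heigm : A.mulVec Vm = (-ζ) • Vm)
    (hperp : ∀ x, mink n Vp x = 0 → mink n Vm x = 0 → A.mulVec x = 0) :
    Tendsto (fun t : ℝ => Real.exp (-(t * ζ)) • NormedSpace.exp (t • A)) atTop
      (nhds ((mink n Vp Vm)⁻¹ • Matrix.of fun i j => minkSign n j * Vm j * Vp i)) :=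
  skew_minkowski_rescaled_exp_limit_general n A ζ Vp Vm hζ hVp hVm hpm heigp heigm hperp
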